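/- (Extremal duality for the first minimum integral, a step in the proof of Theorems 4.4 and 4.5.) Let n ≥ 1, let Ω ⊆ ℂⁿ be a nonempty bounded open set, let w : ℂⁿ → [0,∞) be a measurable weight that is admissible on Ω with ∫_Ω w dλ < ∞, let p ∈ Ω, and let X ∈ ℂⁿ with X ≠ 0. Then the quantities M := sup{|∂_X u(p)|² : u a competitor with u(p)=0 and ‖u‖²_{Ω,w} ≤ 1} and I¹_{Ω,w}(p;X) are both finite and positive, and M · I¹_{Ω,w}(p;X) = 1. -/

import Mathlib

open MeasureTheory Complex
open scoped ENNReal NNReal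

noncomputable section

/-- `ℂⁿ` as Euclidean space. -/
abbrev Cn (n : ℕ) := EuclideanSpace ℂ (Fin n)

instance (n : ℕ) : MeasurableSpace (Cn n) :=
  MeasurableSpace.comap (WithLp.ofLp (p := 2)) (inferInstance : MeasurableSpace (Fin n → ℂ))

instance (n : ℕ) : MeasureSpace (Cn n) :=
  ⟨Measure.map (WithLp.toLp 2) (volume : Measure (Fin n → ℂ))⟩

/-- The squared weighted `L²` norm `‖u‖²_{Ω,w} = ∫_Ω |u|² w dλ`, valued in `[0,∞]`. -/
def wNormSq (n : ℕ) (Ω : Set (Cn n)) (w : Cn n → ℝ) (u : Cn n → ℂ) : ℝ≥0∞ :=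
  ∫⁻ z in Ω, ENNReal.ofReal (‖u z‖ ^ 2 * w z)

/-- A competitor: holomorphic on `Ω` with finite weighted squared norm. -/
def IsCompetitor (n : ℕ) (Ω : Set (Cn n)) (w : Cn n → ℝ) (u : Cn n → ℂ) : Prop :=
  DifferentiableOn ℂ u Ω ∧ wNormSq n Ω w u < ⊤

/-- Minimum integral `I⁰_{Ω,w}(p)`. -/
def I0 (n : ℕ) (Ω : Set (Cn n)) (w : Cn n → ℝ) (p : Cn n) : ℝ≥0∞ :=
  sInf {t | ∃ u, IsCompetitor n Ω w u ∧ u p = 1 ∧ t = wNormSq n Ω w u}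

/-- Minimum integral `I¹_{Ω,w}(p;X)`. -/
def I1 (n : ℕ) (Ω : Set (Cn n)) (w : Cn n → ℝ) (p : Cn n) (X : Cn n) : ℝ≥0∞ :=
  sInf {t | ∃ u, IsCompetitor n Ω w u ∧ u p = 0 ∧ fderiv ℂ u p X = 1 ∧
    t = wNormSq n Ω w u}

/-- Minimum integral `I¹_{Ω,w}(p;X|Y)`. -/
def I1cond (n : ℕ) (Ω : Set (Cn n)) (w : Cn n → ℝ) (p : Cn n) (X Y : Cn n) : ℝ≥0∞ :=
  sInf {t | ∃ u, IsCompetitor n Ω w u ∧ u p = 0 ∧ fderiv ℂ u p Y = 0 ∧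
    fderiv ℂ u p X = 1 ∧ t = wNormSq n Ω w u}

/-- Minimum integral `I¹_{Ω,w}(p;∂_k|_{<k})`. -/
def I1flag (n : ℕ) (Ω : Set (Cn n)) (w : Cn n → ℝ) (p : Cn n) (k : Fin n) : ℝ≥0∞ :=
  sInf {t | ∃ u, IsCompetitor n Ω w u ∧ u p = 0 ∧
    (∀ j : Fin n, j < k → fderiv ℂ u p (EuclideanSpace.single j (1 : ℂ)) = 0) ∧
    fderiv ℂ u p (EuclideanSpace.single k (1 : ℂ)) = 1 ∧ t = wNormSq n Ω w u}

/-- Minimum integral `I²_{Ω,w}(p;X,Y)`. -/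
def I2 (n : ℕ) (Ω : Set (Cn n)) (w : Cn n → ℝ) (p : Cn n) (X Y : Cn n) : ℝ≥0∞ :=
  sInf {t | ∃ u, IsCompetitor n Ω w u ∧ u p = 0 ∧ fderiv ℂ u p = 0 ∧
    fderiv ℂ (fun z => fderiv ℂ u z Y) p X = 1 ∧ t = wNormSq n Ω w u}

/-- Admissibility of a weight on `Ω`: a Cauchy-type estimate on compact subsets. -/
def Admissible (n : ℕ) (Ω : Set (Cn n)) (w : Cn n → ℝ) : Prop :=
  ∀ A : Set (Cn n), IsCompact A → A ⊆ Ω →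
    ∃ C > (0 : ℝ), ∀ u, IsCompetitor n Ω w u → ∀ z ∈ A,
      ‖u z‖ ≤ C * Real.sqrt ((wNormSq n Ω w u).toReal)

/-- The Hermitian inner product `⟨X,Y⟩ = Σ_j X_j conj(Y_j)`. -/
def herm (n : ℕ) (X Y : Cn n) : ℂ := ∑ j, X j * (starRingEnd ℂ) (Y j)

/-- The Kähler–Einstein weight of the ball of radius `r`. -/
def keWeight (n m : ℕ) (r : ℝ) (z : Cn n) : ℝ :=
  if ‖z‖ < r then
    ((n + 1 : ℝ) / r ^ 2) ^ (-(((m : ℤ) - 1) * (n : ℤ))) *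
      ((r ^ 2 - ‖z‖ ^ 2) / r ^ 2) ^ ((m - 1) * (n + 1))
  else 0

/-- The constant `C_m`. -/
def Cm (n m : ℕ) : ℝ :=
  Real.pi ^ n / (n + 1 : ℝ) ^ ((m - 1) * n) *
    (Nat.factorial ((m - 1) * (n + 1)) : ℝ) / (Nat.factorial (m * (n + 1) - 1) : ℝ)

end

-- Lemma A
lemma wNormSq_const_mul (n : ℕ) (Ω : Set (Cn n)) (w : Cn n → ℝ) (u : Cn n → ℂ) (c : ℂ) :
    wNormSq n Ω w (fun z => c * u z) = ENNReal.ofReal (‖c‖ ^ 2) * wNormSq n Ω w u := by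
  unfold wNormSq
  rw [← lintegral_const_mul' _ _ ENNReal.ofReal_ne_top]
  refine lintegral_congr fun z => ?_
  rw [← ENNReal.ofReal_mul (by positivity)]
  congr 1
  rw [norm_mul, mul_pow]; ring

-- Lemma B
lemma deriv_bound {n : ℕ} (Ω : Set (Cn n)) (hΩo : IsOpen Ω)
    (w : Cn n → ℝ) (hadm : Admissible n Ω w)
    (p : Cn n) (hp : p ∈ Ω) (X : Cn n) (hX : X ≠ 0) :
    ∃ C > (0:ℝ), ∀ u, IsCompetitor n Ω w u →
      ‖fderiv ℂ u p X‖ ≤ C * Real.sqrt ((wNormSq n Ω w u).toReal) := by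
  obtain ⟨ε, hε, hball⟩ := Metric.isOpen_iff.mp hΩo p hp
  have hXn : 0 < ‖X‖ := norm_pos_iff.mpr hX
  set r : ℝ := ε / (2 * ‖X‖) with hr
  have hrX : r * ‖X‖ = ε / 2 := by rw [hr]; field_simp [hXn.ne']
  have hrpos : 0 < r := by positivity
  set φ : ℂ → Cn n := fun ζ => p + ζ • X with hφ
  have hφc : Continuous φ := continuous_const.add (continuous_id.smul continuous_const)
  have hsub : ∀ ζ : ℂ, ‖ζ‖ ≤ r → φ ζ ∈ Ω := by
    intro ζ hζ
    apply hball
    simp only [Metric.mem_ball, dist_eq_norm, hφ, add_sub_cancel_left]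
    calc ‖ζ • X‖ = ‖ζ‖ * ‖X‖ := norm_smul _ _
      _ ≤ r * ‖X‖ := by nlinarith
      _ < ε := by rw [hrX]; linarith
  set A := φ '' Metric.closedBall 0 r with hA
  have hAcomp : IsCompact A := (isCompact_closedBall 0 r).image hφc
  have hAΩ : A ⊆ Ω := by
    rintro _ ⟨ζ, hζ, rfl⟩
    exact hsub ζ (by simpa [Metric.mem_closedBall, dist_zero_right] using hζ)
  obtain ⟨C, hC, hCb⟩ := hadm A hAcomp hAΩ
  refine ⟨3 * C / r, by positivity, fun u hu => ?_⟩
  set N := Real.sqrt ((wNormSq n Ω w u).toReal) with hN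
  have hN0 : 0 ≤ N := Real.sqrt_nonneg _
  set g : ℂ → ℂ := fun ζ => u (φ ζ) with hg
  have hmemA : ∀ ζ : ℂ, ‖ζ‖ ≤ r → φ ζ ∈ A :=
    fun ζ hζ => ⟨ζ, by simpa [Metric.mem_closedBall, dist_zero_right] using hζ, rfl⟩
  have hgb : ∀ ζ : ℂ, ‖ζ‖ ≤ r → ‖g ζ‖ ≤ C * N := fun ζ hζ => hCb u hu _ (hmemA ζ hζ)
  have hφ0 : φ 0 = p := by simp [hφ]
  have hder : HasDerivAt g (fderiv ℂ u p X) 0 := by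
    have h1 : HasDerivAt φ X 0 := by
      have := ((hasDerivAt_id (0:ℂ)).smul_const X).const_add p
      simpa [hφ] using this
    have h2 : DifferentiableAt ℂ u p := hu.1.differentiableAt (hΩo.mem_nhds hp)
    have h3 : HasFDerivAt u (fderiv ℂ u p) (φ 0) := hφ0 ▸ h2.hasFDerivAt
    exact h3.comp_hasDerivAt 0 h1
  have hgd : DifferentiableOn ℂ g (Metric.ball 0 r) := by
    intro ζ hζ
    have hζ' : ‖ζ‖ ≤ r := le_of_lt (by simpa [Metric.mem_ball, dist_zero_right] using hζ)
    have hΩζ : φ ζ ∈ Ω := hsub ζ hζ'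
    have h2 : DifferentiableAt ℂ u (φ ζ) := hu.1.differentiableAt (hΩo.mem_nhds hΩζ)
    have h1 : DifferentiableAt ℂ φ ζ :=
      (((hasDerivAt_id ζ).smul_const X).const_add p).differentiableAt
    exact (h2.comp ζ h1).differentiableWithinAt
  rcases eq_or_lt_of_le hN0 with h0 | hpos
  · have hg0 : ∀ ζ ∈ Metric.ball (0:ℂ) r, g ζ = (0:ℂ) := by
      intro ζ hζ
      have h1 := hgb ζ (le_of_lt (by simpa [Metric.mem_ball, dist_zero_right] using hζ))
      rw [← h0, mul_zero] at h1
      exact norm_le_zero_iff.mp h1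
    have heq : g =ᶠ[nhds (0:ℂ)] fun _ => (0:ℂ) :=
      Filter.eventuallyEq_of_mem (Metric.ball_mem_nhds 0 hrpos) hg0
    have hd0 : fderiv ℂ u p X = 0 := by
      have h1 := heq.deriv_eq
      rw [hder.deriv] at h1
      simpa using h1
    rw [hd0]
    simp [← h0]
  · have hmaps : Set.MapsTo g (Metric.ball 0 r) (Metric.ball (g 0) (3 * C * N)) := by
      intro ζ hζ
      have h1 := hgb ζ (le_of_lt (by simpa [Metric.mem_ball, dist_zero_right] using hζ))
      have h2 := hgb 0 (by simpa using hrpos.le)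
      rw [Metric.mem_ball, dist_eq_norm]
      calc ‖g ζ - g 0‖ ≤ ‖g ζ‖ + ‖g 0‖ := norm_sub_le _ _
        _ ≤ C * N + C * N := add_le_add h1 h2
        _ < 3 * C * N := by nlinarith
    have hb := Complex.norm_deriv_le_div_of_mapsTo_ball hgd (hmaps.mono_right Metric.ball_subset_closedBall) hrpos
    rw [hder.deriv] at hb
    calc ‖fderiv ℂ u p X‖ ≤ 3 * C * N / r := hb
      _ = 3 * C / r * N := by ring


/-- Extremal duality for the first minimum integral. -/
theorem extremal_duality_I1 {n : ℕ} (hn : 1 ≤ n)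
    (Ω : Set (Cn n)) (hΩo : IsOpen Ω) (hne : Ω.Nonempty) (hbd : Bornology.IsBounded Ω)
    (w : Cn n → ℝ) (hwm : Measurable w) (hw0 : ∀ z, 0 ≤ w z)
    (hadm : Admissible n Ω w)
    (hwint : (∫⁻ z in Ω, ENNReal.ofReal (w z)) < ⊤)
    (p : Cn n) (hp : p ∈ Ω) (X : Cn n) (hX : X ≠ 0)
    (M : ℝ≥0∞)
    (hM : M = sSup {t | ∃ u, IsCompetitor n Ω w u ∧ u p = 0 ∧
      wNormSq n Ω w u ≤ 1 ∧ t = ENNReal.ofReal (‖fderiv ℂ u p X‖ ^ 2)}) :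
    0 < M ∧ M < ⊤ ∧ 0 < I1 n Ω w p X ∧ I1 n Ω w p X < ⊤ ∧
      M * I1 n Ω w p X = 1 := by
  obtain ⟨C, hC, hCb⟩ := deriv_bound Ω hΩo w hadm p hp X hX
  have hXn : (0:ℝ) < ‖X‖ := norm_pos_iff.mpr hX
  -- lower bound for any admissible competitor with derivative 1
  have hlow : ∀ v, IsCompetitor n Ω w v → fderiv ℂ v p X = 1 →
      ENNReal.ofReal (1 / C ^ 2) ≤ wNormSq n Ω w v := by
    intro v hv hvfd
    have h1 := hCb v hv
    rw [hvfd] at h1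
    have h2 : (1:ℝ) ≤ C * Real.sqrt ((wNormSq n Ω w v).toReal) := by simpa using h1
    set t := (wNormSq n Ω w v).toReal with ht
    have htn : 0 ≤ t := ENNReal.toReal_nonneg
    have hs : Real.sqrt t ^ 2 = t := Real.sq_sqrt htn
    have h3 : 1 ≤ t * C ^ 2 := by nlinarith [Real.sqrt_nonneg t]
    have h4 : 1 / C ^ 2 ≤ t := (div_le_iff₀ (by positivity)).mpr h3
    calc ENNReal.ofReal (1 / C ^ 2) ≤ ENNReal.ofReal t := ENNReal.ofReal_le_ofReal h4
      _ = wNormSq n Ω w v := ENNReal.ofReal_toReal hv.2.ne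
  -- the affine example
  set c0 : ℂ := ((‖X‖ : ℂ) ^ 2)⁻¹ with hc0
  have hX2 : ((‖X‖ : ℂ) ^ 2) ≠ 0 := by
    exact pow_ne_zero 2 (Complex.ofReal_ne_zero.mpr hXn.ne')
  set L : Cn n →L[ℂ] ℂ := innerSL ℂ X with hL
  set u₀ : Cn n → ℂ := fun z => c0 * L (z - p) with hu₀def
  have hL1 : HasFDerivAt (fun z : Cn n => L (z - p)) (L : Cn n →L[ℂ] ℂ) p := by
    have h2 : HasFDerivAt (fun z : Cn n => z - p) (ContinuousLinearMap.id ℂ (Cn n)) p :=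
      (hasFDerivAt_id p).sub_const p
    have h3 := L.hasFDerivAt.comp p h2
    rwa [ContinuousLinearMap.comp_id] at h3
  have hu₀d : Differentiable ℂ u₀ := by
    have h1 : Differentiable ℂ (fun z : Cn n => L (z - p)) :=
      L.differentiable.comp (differentiable_id.sub_const p)
    exact h1.const_mul c0
  have hu₀fd : fderiv ℂ u₀ p X = 1 := by
    have h := hL1.const_mul c0
    rw [hu₀def, h.fderiv]
    simp only [ContinuousLinearMap.smul_apply, smul_eq_mul]
    rw [hL, innerSL_apply_apply, inner_self_eq_norm_sq_to_K]
    exact inv_mul_cancel₀ hX2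
  obtain ⟨R, hR⟩ := hbd.subset_closedBall p
  have hR0 : 0 ≤ R := by
    have := hR hp
    simpa [Metric.mem_closedBall] using (dist_nonneg.trans this)
  set B : ℝ := ‖c0‖ * (‖X‖ * R) with hB
  have hu₀b : ∀ z ∈ Ω, ‖u₀ z‖ ≤ B := by
    intro z hz
    have h1 : ‖L (z - p)‖ ≤ ‖X‖ * ‖z - p‖ := by
      rw [hL, innerSL_apply_apply]; exact norm_inner_le_norm X (z - p)
    have h2 : ‖z - p‖ ≤ R := by
      have := hR hz
      simpa [Metric.mem_closedBall, dist_eq_norm] using this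
    calc ‖u₀ z‖ = ‖c0‖ * ‖L (z - p)‖ := norm_mul _ _
      _ ≤ ‖c0‖ * (‖X‖ * R) := by
          apply mul_le_mul_of_nonneg_left _ (norm_nonneg c0)
          calc ‖L (z - p)‖ ≤ ‖X‖ * ‖z - p‖ := h1
            _ ≤ ‖X‖ * R := by nlinarith
      _ = B := rfl
  have hB0 : 0 ≤ B := by positivity
  have hfin : wNormSq n Ω w u₀ < ⊤ := by
    unfold wNormSq
    calc ∫⁻ z in Ω, ENNReal.ofReal (‖u₀ z‖ ^ 2 * w z)
        ≤ ∫⁻ z in Ω, ENNReal.ofReal (B ^ 2) * ENNReal.ofReal (w z) := by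
          apply setLIntegral_mono (measurable_const.mul hwm.ennreal_ofReal)
          intro z hz
          show ENNReal.ofReal (‖u₀ z‖ ^ 2 * w z) ≤ ENNReal.ofReal (B ^ 2) * ENNReal.ofReal (w z)
          rw [← ENNReal.ofReal_mul (by positivity)]
          apply ENNReal.ofReal_le_ofReal
          have h1 := hu₀b z hz
          have h3 : ‖u₀ z‖ ^ 2 ≤ B ^ 2 := by nlinarith [norm_nonneg (u₀ z)]
          exact mul_le_mul_of_nonneg_right h3 (hw0 z)
      _ = ENNReal.ofReal (B ^ 2) * ∫⁻ z in Ω, ENNReal.ofReal (w z) :=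
          lintegral_const_mul' _ _ ENNReal.ofReal_ne_top
      _ < ⊤ := ENNReal.mul_lt_top ENNReal.ofReal_lt_top hwint
  have hcomp₀ : IsCompetitor n Ω w u₀ := ⟨hu₀d.differentiableOn, hfin⟩
  have hu₀p : u₀ p = 0 := by simp [hu₀def]
  have hI1top : I1 n Ω w p X < ⊤ :=
    lt_of_le_of_lt (sInf_le ⟨u₀, hcomp₀, hu₀p, hu₀fd, rfl⟩) hfin
  have hI1pos : 0 < I1 n Ω w p X := by
    refine lt_of_lt_of_le (ENNReal.ofReal_pos.mpr (show (0:ℝ) < 1 / C ^ 2 by positivity)) ?_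
    apply le_sInf
    rintro t ⟨v, hv, -, hvfd, rfl⟩
    exact hlow v hv hvfd
  -- M ≤ I1⁻¹
  have hMle : M ≤ (I1 n Ω w p X)⁻¹ := by
    rw [hM]
    apply sSup_le
    rintro t ⟨u, hu, hup, hle, rfl⟩
    rcases eq_or_ne (fderiv ℂ u p X) 0 with h0 | h0
    · simp [h0]
    · set a := fderiv ℂ u p X with ha
      have han : (0:ℝ) < ‖a‖ := norm_pos_iff.mpr h0
      set v : Cn n → ℂ := fun z => a⁻¹ * u z with hvdef
      have hvd : DifferentiableOn ℂ v Ω := (differentiableOn_const a⁻¹).mul hu.1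
      have hvn : wNormSq n Ω w v = ENNReal.ofReal (‖a⁻¹‖ ^ 2) * wNormSq n Ω w u :=
        wNormSq_const_mul n Ω w u a⁻¹
      have hvle : wNormSq n Ω w v ≤ ENNReal.ofReal ((‖a‖ ^ 2)⁻¹) := by
        rw [hvn, norm_inv, inv_pow]
        calc ENNReal.ofReal ((‖a‖ ^ 2)⁻¹) * wNormSq n Ω w u
            ≤ ENNReal.ofReal ((‖a‖ ^ 2)⁻¹) * 1 := mul_le_mul_right hle _
          _ = ENNReal.ofReal ((‖a‖ ^ 2)⁻¹) := mul_one _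
      have hvfin : wNormSq n Ω w v < ⊤ := lt_of_le_of_lt hvle ENNReal.ofReal_lt_top
      have hvp : v p = 0 := by simp [hvdef, hup]
      have hvfd : fderiv ℂ v p X = 1 := by
        have hd : DifferentiableAt ℂ u p := hu.1.differentiableAt (hΩo.mem_nhds hp)
        have := fderiv_const_mul hd a⁻¹
        rw [hvdef]
        rw [show (fun z => a⁻¹ * u z) = (fun z => a⁻¹ * u z) from rfl, this]
        simp [← ha, inv_mul_cancel₀ h0]
      have hI1le : I1 n Ω w p X ≤ (ENNReal.ofReal (‖a‖ ^ 2))⁻¹ := by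
        rw [← ENNReal.ofReal_inv_of_pos (by positivity)]
        exact le_trans (sInf_le ⟨v, ⟨hvd, hvfin⟩, hvp, hvfd, rfl⟩) hvle
      calc ENNReal.ofReal (‖a‖ ^ 2) = ((ENNReal.ofReal (‖a‖ ^ 2))⁻¹)⁻¹ := (inv_inv _).symm
        _ ≤ (I1 n Ω w p X)⁻¹ := ENNReal.inv_le_inv.mpr hI1le
  -- M⁻¹ ≤ I1
  have hMge : M⁻¹ ≤ I1 n Ω w p X := by
    apply le_sInf
    rintro t ⟨v, hv, hvp, hvfd, rfl⟩
    set N := wNormSq n Ω w v with hNdef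
    have hNtop : N ≠ ⊤ := hv.2.ne
    have hN0 : N ≠ 0 := by
      intro h
      have h1 := hlow v hv hvfd
      rw [← hNdef, h] at h1
      simp only [nonpos_iff_eq_zero, ENNReal.ofReal_eq_zero, le_zero_iff] at h1
      have : (0:ℝ) < 1 / C ^ 2 := by positivity
      linarith
    have htpos : 0 < N.toReal := ENNReal.toReal_pos hN0 hNtop
    set s := Real.sqrt N.toReal with hs
    have hspos : 0 < s := Real.sqrt_pos.mpr htpos
    set c : ℂ := ((s⁻¹ : ℝ) : ℂ) with hc
    set u : Cn n → ℂ := fun z => c * v z with hudef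
    have hud : DifferentiableOn ℂ u Ω := (differentiableOn_const c).mul hv.1
    have hcnorm : ‖c‖ ^ 2 = (N.toReal)⁻¹ := by
      rw [hc, Complex.norm_real, Real.norm_eq_abs, abs_of_pos (by positivity), inv_pow,
        hs, Real.sq_sqrt htpos.le]
    have hun1 : wNormSq n Ω w u = 1 := by
      rw [hudef, wNormSq_const_mul, hcnorm,
        ENNReal.ofReal_inv_of_pos htpos, ENNReal.ofReal_toReal hNtop, ← hNdef]
      exact ENNReal.inv_mul_cancel hN0 hNtop
    have hufd : fderiv ℂ u p X = c := by
      have hd : DifferentiableAt ℂ v p := hv.1.differentiableAt (hΩo.mem_nhds hp)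
      rw [hudef, fderiv_const_mul hd c]
      simp [hvfd]
    have hup : u p = 0 := by simp [hudef, hvp]
    have hmem : ENNReal.ofReal (‖fderiv ℂ u p X‖ ^ 2) ∈
        {t | ∃ u, IsCompetitor n Ω w u ∧ u p = 0 ∧
          wNormSq n Ω w u ≤ 1 ∧ t = ENNReal.ofReal (‖fderiv ℂ u p X‖ ^ 2)} :=
      ⟨u, ⟨hud, by rw [hun1]; exact ENNReal.one_lt_top⟩, hup, le_of_eq hun1, rfl⟩
    have hMgeN : N⁻¹ ≤ M := by
      rw [hM]
      refine le_trans (le_of_eq ?_) (le_sSup hmem)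
      rw [hufd, hcnorm, ENNReal.ofReal_inv_of_pos htpos, ENNReal.ofReal_toReal hNtop]
    calc M⁻¹ ≤ (N⁻¹)⁻¹ := ENNReal.inv_le_inv.mpr hMgeN
      _ = N := inv_inv N
  have hMeq : M = (I1 n Ω w p X)⁻¹ := by
    refine le_antisymm hMle ?_
    calc (I1 n Ω w p X)⁻¹ ≤ (M⁻¹)⁻¹ := ENNReal.inv_le_inv.mpr hMge
      _ = M := inv_inv M
  refine ⟨?_, ?_, hI1pos, hI1top, ?_⟩
  · rw [hMeq]; exact ENNReal.inv_pos.mpr hI1top.ne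
  · rw [hMeq]; exact ENNReal.inv_lt_top.mpr hI1pos
  · rw [hMeq]; exact ENNReal.inv_mul_cancel hI1pos.ne' hI1top.ne
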